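/- arXiv:2012.03879 — 3 statements merged into one kernel-verified Lean document; each statement's English description precedes it below -/
import Mathlib

section
/- Let Φ be an irreducible Markov chain on a finite state space S with stationary distribution π, and let x₀ ∈ S with π(x₀) > 0. If ξ denotes the first return time to x₀ starting from x₀, then E[ξ²] = (1 + 2·E_π[T_{x₀}]) / π(x₀), where E_π[T_{x₀}] is the expected hitting time of x₀ when the initial state is distributed according to π. -/
/-- Probability of a path: the product of one-step transition probabilities along
consecutive states of the list. -/
noncomputable def pathProb {S : Type*} (p : S → S → ℝ) : List S → ℝ
  | [] => 1
  | [_] => 1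
  | a :: b :: rest => p a b * pathProb p (b :: rest)

/-!
Write `A n = P_{x₀}(ξ > n)` and `V n = P_π(T_{x₀} > n)`. Both are computed with the taboo
matrix `Q`, the transition matrix with the column of `x₀` erased: `A n = (Qⁿ 𝟙) x₀` and
`V n = ∑_{y ≠ x₀} π y (Qⁿ 𝟙) y`. Stationarity gives `πQ = π` off `x₀` and `0` at `x₀`, whence
the renewal identity `V n - V (n+1) = π(x₀) A (n+1)`. Summation by parts turns
`E[ξ²] = ∑ (n+1)² (A n - A (n+1))` into `1 + ∑ (2n+3) A (n+1)`; the renewal identity turns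
`E_π[T] = ∑ (n+1) (V n - V (n+1))` into `π(x₀) ∑ (n+1) A (n+1)`, and telescoping it gives Kac's
formula `π(x₀) ∑ A (n+1) = V 0 = 1 - π(x₀)`. These three combine to the claim.
Irreducibility makes `A` and `V` decay geometrically, which justifies every rearrangement.
-/

open Filter Topology Finset Matrix

theorem hasSum_sigma_of_nonneg {ι : Type*} {β : ι → Type*} {f : (Σ i, β i) → ℝ}
    (hf : ∀ x, 0 ≤ f x) {g : ι → ℝ} (hfg : ∀ i, HasSum (fun b => f ⟨i, b⟩) (g i)) {a : ℝ}
    (hg : HasSum g a) : HasSum f a := by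
  have hsum : Summable f := (summable_sigma_of_nonneg hf).2
    ⟨fun i => (hfg i).summable, hg.summable.congr fun i => ((hfg i).tsum_eq).symm⟩
  convert hsum.hasSum
  rw [hsum.tsum_sigma' fun i => (hfg i).summable, ← hg.tsum_eq]
  exact tsum_congr fun i => ((hfg i).tsum_eq).symm

theorem tsum_mul_sub_succ {f A : ℕ → ℝ} (h₀ : Summable fun n => f n * A n)
    (h₁ : Summable fun n => f n * A (n + 1)) :
    ∑' n, f n * (A n - A (n + 1)) = f 0 * A 0 + ∑' n, (f (n + 1) - f n) * A (n + 1) := by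
  have h₂ : Summable fun n => f (n + 1) * A (n + 1) := (summable_nat_add_iff 1).2 h₀
  simp only [mul_sub, sub_mul]
  rw [h₀.tsum_sub h₁, h₀.tsum_eq_zero_add, h₂.tsum_sub h₁]
  ring

theorem hasSum_sub_succ_of_tendsto {V : ℕ → ℝ} (hs : Summable fun n => V n - V (n + 1))
    (hV : Tendsto V atTop (𝓝 0)) : HasSum (fun n => V n - V (n + 1)) (V 0) := by
  rw [hs.hasSum_iff_tendsto_nat]
  simp only [Finset.sum_range_sub']
  simpa using (tendsto_const_nhds (x := V 0)).sub hV

theorem second_moment_eq_of_tails {A V : ℕ → ℝ} {c : ℝ}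
    (hA : Summable fun n : ℕ => ((n : ℝ) + 1) ^ 2 * A n) (hA0 : A 0 = 1)
    (hV : Tendsto V atTop (𝓝 0)) (hV0 : V 0 = 1 - c)
    (hVA : ∀ n, V n - V (n + 1) = c * A (n + 1)) :
    c * ∑' n : ℕ, ((n : ℝ) + 1) ^ 2 * (A n - A (n + 1))
      = 1 + 2 * ∑' n : ℕ, ((n : ℝ) + 1) * (V n - V (n + 1)) := by
  have hA' : Summable fun n : ℕ => |((n : ℝ) + 2) ^ 2 * A (n + 1)| :=
    (((summable_nat_add_iff 1).2 hA).congr fun n => by push_cast; ring).abs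
  have hshift : ∀ k ≤ 2, Summable fun n : ℕ => ((n : ℝ) + 1) ^ k * A (n + 1) := fun k hk =>
    hA'.of_norm_bounded fun n => by
      have hpow : |((n : ℝ) + 1) ^ k| ≤ |((n : ℝ) + 2) ^ 2| := by
        rw [abs_of_nonneg (by positivity), abs_of_nonneg (by positivity)]
        calc ((n : ℝ) + 1) ^ k ≤ ((n : ℝ) + 1) ^ 2 := pow_le_pow_right₀ (by linarith) hk
          _ ≤ ((n : ℝ) + 2) ^ 2 := by gcongr; linarith
      rw [Real.norm_eq_abs, abs_mul, abs_mul]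
      exact mul_le_mul_of_nonneg_right hpow (abs_nonneg _)
  have h₀ : Summable fun n => A (n + 1) := by simpa using hshift 0 (by norm_num)
  have h₁ : Summable fun n : ℕ => ((n : ℝ) + 1) * A (n + 1) := by simpa using hshift 1 (by norm_num)
  have hKac : ∑' n, A (n + 1) * c = 1 - c := by
    rw [← hV0, ← (hasSum_sub_succ_of_tendsto _ hV).tsum_eq]
    · exact tsum_congr fun n => by rw [hVA, mul_comm]
    · simpa only [hVA, mul_comm c] using h₀.mul_right c
  have hparts : ∑' n : ℕ, ((n : ℝ) + 1) ^ 2 * (A n - A (n + 1))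
      = 1 + 2 * ∑' n : ℕ, ((n : ℝ) + 1) * A (n + 1) + ∑' n, A (n + 1) := by
    rw [tsum_mul_sub_succ hA (hshift 2 le_rfl), hA0, add_assoc, ← tsum_mul_left,
      ← (h₁.mul_left 2).tsum_add h₀]
    push_cast
    congr 1
    · ring
    · exact tsum_congr fun n => by ring
  have hE : ∑' n : ℕ, ((n : ℝ) + 1) * (V n - V (n + 1))
      = c * ∑' n : ℕ, ((n : ℝ) + 1) * A (n + 1) := by
    rw [← tsum_mul_left]
    exact tsum_congr fun n => by rw [hVA]; ring
  rw [tsum_mul_right] at hKac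
  rw [hparts, hE]
  linear_combination hKac

theorem exists_pow_ge_of_lt_one {c : ℝ} (hc : c < 1) {N : ℕ} (hN : N ≠ 0) :
    ∃ ρ : ℝ, 0 < ρ ∧ ρ < 1 ∧ c ≤ ρ ^ N := by
  set d := max c 2⁻¹
  have hd0 : 0 < d := lt_max_of_lt_right (by norm_num)
  refine ⟨d ^ (N⁻¹ : ℝ), Real.rpow_pos_of_pos hd0 _, ?_, ?_⟩
  · exact Real.rpow_lt_one hd0.le (max_lt hc (by norm_num)) (by positivity)
  · rw [Real.rpow_inv_natCast_pow hd0.le hN]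
    exact le_max_left _ _

theorem le_pow_div_pow_of_le_pow_mul_add {u : ℕ → ℝ} {ρ : ℝ} {N : ℕ} (hρ0 : 0 < ρ) (hρ1 : ρ ≤ 1)
    (hN : N ≠ 0) (hu : ∀ n, u n ≤ 1) (hshift : ∀ n, u (n + N) ≤ ρ ^ N * u n) (n : ℕ) :
    u n ≤ ρ ^ n / ρ ^ N := by
  induction n using Nat.strong_induction_on with
  | _ n ih =>
    rcases lt_or_ge n N with h | h
    · rw [le_div_iff₀ (by positivity)]
      calc u n * ρ ^ N ≤ 1 * ρ ^ n :=
            mul_le_mul (hu n) (pow_le_pow_of_le_one hρ0.le hρ1 h.le) (by positivity) zero_le_one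
        _ = ρ ^ n := one_mul _
    · obtain ⟨m, rfl⟩ := Nat.exists_eq_add_of_le' h
      calc u (m + N) ≤ ρ ^ N * u m := hshift m
        _ ≤ ρ ^ N * (ρ ^ m / ρ ^ N) := by gcongr; exact ih m (by omega)
        _ = ρ ^ (m + N) / ρ ^ N := by rw [pow_add]; field_simp

theorem summable_succ_sq_mul_pow {ρ : ℝ} (hρ0 : 0 ≤ ρ) (hρ1 : ρ < 1) :
    Summable fun n : ℕ => ((n : ℝ) + 1) ^ 2 * ρ ^ n := by
  have hρ : ‖ρ‖ < 1 := by rwa [Real.norm_of_nonneg hρ0]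
  refine (((summable_pow_mul_geometric_of_norm_lt_one 2 hρ).add
    ((summable_pow_mul_geometric_of_norm_lt_one 1 hρ).mul_left 2)).add
    (summable_geometric_of_lt_one hρ0 hρ1)).congr fun n => ?_
  ring

theorem pathProb_nonneg {S : Type*} {P : S → S → ℝ} (hP : ∀ u v, 0 ≤ P u v) :
    ∀ L : List S, 0 ≤ pathProb P L
  | [] => zero_le_one
  | [_] => zero_le_one
  | _ :: b :: rest => mul_nonneg (hP _ _) (pathProb_nonneg hP (b :: rest))

def listSubtypeEquiv {α : Type*} (P : α → Prop) :
    List {a // P a} ≃ {l : List α // ∀ a ∈ l, P a} where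
  toFun l := ⟨l.map Subtype.val, by simp only [List.mem_map]; rintro _ ⟨a, -, rfl⟩; exact a.2⟩
  invFun l := l.1.attachWith P l.2
  left_inv l := List.map_injective_iff.2 Subtype.val_injective (by simp)
  right_inv l := Subtype.ext (List.attachWith_map_subtype_val _)

namespace Matrix

variable {S : Type*} [Fintype S]

theorem mulVec_apply_mono {M : Matrix S S ℝ} (hM : ∀ i j, 0 ≤ M i j) {f g : S → ℝ}
    (hfg : ∀ i, f i ≤ g i) (i : S) : (M *ᵥ f) i ≤ (M *ᵥ g) i :=
  Finset.sum_le_sum fun j _ => mul_le_mul_of_nonneg_left (hfg j) (hM i j)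

theorem pow_apply_le_pow_apply [DecidableEq S] {M N : Matrix S S ℝ} (hM : ∀ i j, 0 ≤ M i j)
    (hMN : ∀ i j, M i j ≤ N i j) (n : ℕ) (i j : S) : (M ^ n) i j ≤ (N ^ n) i j := by
  induction n generalizing j with
  | zero => rfl
  | succ n ih =>
    rw [pow_succ, pow_succ, mul_apply, mul_apply]
    exact Finset.sum_le_sum fun k _ => mul_le_mul (ih k) (hMN k j) (hM k j)
      ((pow_apply_nonneg hM n i k).trans (ih k))

end Matrix

section Taboo

variable {S : Type*} [DecidableEq S]

/-- `(Qⁿ) u v` is the probability of going from `u` to `v` in `n` steps without entering `x₀`. -/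
def tabooMatrix (p : Matrix S S ℝ) (x₀ : S) : Matrix S S ℝ :=
  Matrix.of fun u v => if v = x₀ then 0 else p u v

variable {p : Matrix S S ℝ} {x₀ : S}

theorem tabooMatrix_nonneg (hp0 : ∀ u v, 0 ≤ p u v) (u v : S) : 0 ≤ tabooMatrix p x₀ u v := by
  rw [tabooMatrix, of_apply]
  split_ifs
  exacts [le_rfl, hp0 u v]

theorem tabooMatrix_le (hp0 : ∀ u v, 0 ≤ p u v) (u v : S) : tabooMatrix p x₀ u v ≤ p u v := by
  rw [tabooMatrix, of_apply]
  split_ifs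
  exacts [hp0 u v, le_rfl]

variable [Fintype S]

variable (p x₀) in
/-- `P_u(X₁, …, Xₙ ≠ x₀)`. -/
noncomputable def avoidProb (n : ℕ) : S → ℝ := tabooMatrix p x₀ ^ n *ᵥ 1

variable (p x₀) in
/-- `P_u(T⁺_{x₀} = n + 1)`, where `T⁺_{x₀} = min {t ≥ 1 : X_t = x₀}`. -/
noncomputable def firstVisitProb (n : ℕ) : S → ℝ := tabooMatrix p x₀ ^ n *ᵥ fun u => p u x₀

theorem tabooMatrix_mulVec_apply (f : S → ℝ) (u : S) :
    (tabooMatrix p x₀ *ᵥ f) u = ∑ v ∈ univ.erase x₀, p u v * f v := by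
  rw [mulVec, dotProduct, ← Finset.sum_erase (a := x₀) _ (by simp [tabooMatrix])]
  exact Finset.sum_congr rfl fun v hv => by simp [tabooMatrix, Finset.ne_of_mem_erase hv]

theorem mulVec_apply_eq_tabooMatrix_mulVec_add (f : S → ℝ) (u : S) :
    (p *ᵥ f) u = (tabooMatrix p x₀ *ᵥ f) u + p u x₀ * f x₀ := by
  rw [tabooMatrix_mulVec_apply, mulVec, dotProduct, ← Finset.add_sum_erase _ _ (mem_univ x₀),
    add_comm]

theorem tabooMatrix_pow_succ_apply_self (n : ℕ) (u : S) :
    (tabooMatrix p x₀ ^ (n + 1)) u x₀ = 0 := by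
  simp [pow_succ, Matrix.mul_apply, tabooMatrix]

theorem avoidProb_zero : avoidProb p x₀ 0 = 1 := by
  simp [avoidProb]

theorem avoidProb_succ (n : ℕ) :
    avoidProb p x₀ (n + 1) = tabooMatrix p x₀ *ᵥ avoidProb p x₀ n := by
  rw [avoidProb, avoidProb, mulVec_mulVec, pow_succ']

theorem firstVisitProb_succ (n : ℕ) :
    firstVisitProb p x₀ (n + 1) = tabooMatrix p x₀ *ᵥ firstVisitProb p x₀ n := by
  rw [firstVisitProb, firstVisitProb, mulVec_mulVec, pow_succ']

theorem avoidProb_nonneg (hp0 : ∀ u v, 0 ≤ p u v) (n : ℕ) (u : S) : 0 ≤ avoidProb p x₀ n u :=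
  Finset.sum_nonneg fun v _ =>
    mul_nonneg (pow_apply_nonneg (tabooMatrix_nonneg hp0) n u v) zero_le_one

theorem firstVisitProb_nonneg (hp0 : ∀ u v, 0 ≤ p u v) (n : ℕ) (u : S) :
    0 ≤ firstVisitProb p x₀ n u :=
  Finset.sum_nonneg fun v _ =>
    mul_nonneg (pow_apply_nonneg (tabooMatrix_nonneg hp0) n u v) (hp0 v x₀)

theorem avoidProb_sub_succ (hp1 : p *ᵥ 1 = 1) (n : ℕ) :
    avoidProb p x₀ n - avoidProb p x₀ (n + 1) = firstVisitProb p x₀ n := by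
  have hsplit : (1 : S → ℝ) = tabooMatrix p x₀ *ᵥ 1 + fun u => p u x₀ := by
    ext u
    have := mulVec_apply_eq_tabooMatrix_mulVec_add (p := p) (x₀ := x₀) 1 u
    rw [hp1] at this
    simpa using this
  rw [sub_eq_iff_eq_add', avoidProb, avoidProb, firstVisitProb]
  conv_lhs => rw [hsplit]
  rw [mulVec_add, mulVec_mulVec, pow_succ]

theorem sum_pathProb_eq_firstVisitProb (n : ℕ) (y : S) :
    ∑ l : Fin n → {v // v ≠ x₀}, pathProb p (y :: (List.ofFn (fun i => (l i : S)) ++ [x₀]))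
      = firstVisitProb p x₀ n y := by
  induction n generalizing y with
  | zero => simp [pathProb, firstVisitProb]
  | succ n ih =>
    rw [← (Fin.consEquiv fun _ => {v // v ≠ x₀}).sum_comp, Fintype.sum_prod_type,
      firstVisitProb_succ, tabooMatrix_mulVec_apply,
      Finset.sum_subtype (univ.erase x₀) (p := (· ≠ x₀)) (fun v => by simp)]
    refine Finset.sum_congr rfl fun v _ => ?_
    rw [← ih, Finset.mul_sum]
    simp [List.ofFn_succ, pathProb]

theorem hasSum_pathProb_avoiding (hp0 : ∀ u v, 0 ≤ p u v) {w : ℕ → ℝ} (hw : ∀ n, 0 ≤ w n)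
    (y : S) {s : ℝ} (hs : HasSum (fun n => w n * firstVisitProb p x₀ n y) s) :
    HasSum (fun L : {L : List S // ∀ z ∈ L, z ≠ x₀} =>
      pathProb p (y :: L.1 ++ [x₀]) * w L.1.length) s := by
  rw [← (List.equivSigmaTuple.symm.trans (listSubtypeEquiv _)).hasSum_iff]
  refine hasSum_sigma_of_nonneg (fun _ => mul_nonneg (pathProb_nonneg hp0 _) (hw _))
    (fun n => ?_) hs
  rw [← sum_pathProb_eq_firstVisitProb, Finset.mul_sum]
  convert hasSum_fintype (β := Fin n → {v // v ≠ x₀}) _ using 1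
  simp only [listSubtypeEquiv, Equiv.trans_apply, List.equivSigmaTuple_symm_apply, Equiv.coe_fn_mk,
    List.map_ofFn, Function.comp_def, List.cons_append, List.length_ofFn, mul_comm]

theorem avoidProb_antitone (hp : p ∈ rowStochastic ℝ S) (u : S) :
    Antitone fun n => avoidProb p x₀ n u :=
  antitone_nat_of_succ_le fun n => sub_nonneg.1 <| by
    rw [← Pi.sub_apply, avoidProb_sub_succ hp.2]
    exact firstVisitProb_nonneg hp.1 n u

theorem avoidProb_le_one (hp : p ∈ rowStochastic ℝ S) (n : ℕ) (u : S) : avoidProb p x₀ n u ≤ 1 := by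
  simpa [avoidProb_zero] using avoidProb_antitone hp u n.zero_le

theorem firstVisitProb_le_avoidProb (hp : p ∈ rowStochastic ℝ S) (n : ℕ) (u : S) :
    firstVisitProb p x₀ n u ≤ avoidProb p x₀ n u := by
  rw [← avoidProb_sub_succ hp.2, Pi.sub_apply, sub_le_self_iff]
  exact avoidProb_nonneg hp.1 _ u

theorem avoidProb_add_pow_apply_le_one (hp : p ∈ rowStochastic ℝ S) {n : ℕ} (hn : n ≠ 0) (u : S) :
    avoidProb p x₀ n u + (p ^ n) u x₀ ≤ 1 := by
  obtain ⟨m, rfl⟩ := Nat.exists_eq_succ_of_ne_zero hn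
  have hQ : avoidProb p x₀ (m + 1) u = ∑ v ∈ univ.erase x₀, (tabooMatrix p x₀ ^ (m + 1)) u v := by
    rw [Finset.sum_erase _ (tabooMatrix_pow_succ_apply_self m u)]
    simp [avoidProb, mulVec, dotProduct]
  rw [hQ, ← sum_row_of_mem_rowStochastic (pow_mem hp (m + 1)) u,
    ← Finset.add_sum_erase _ _ (mem_univ x₀), add_comm]
  gcongr with v
  exact pow_apply_le_pow_apply (tabooMatrix_nonneg hp.1) (tabooMatrix_le hp.1) _ _ _

theorem exists_pow_apply_pos (hp : p ∈ rowStochastic ℝ S)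
    (hirr : ∀ u v : S, ∃ n : ℕ, 0 < (p ^ n) u v) (u : S) : ∃ n ≠ 0, 0 < (p ^ n) u x₀ := by
  -- Passing through a successor `v` of `u` forces a positive number of steps, even if `u = x₀`.
  obtain ⟨v, hv⟩ : ∃ v, 0 < p u v := by
    by_contra! h
    linarith [sum_row_of_mem_rowStochastic hp u, Finset.sum_nonpos fun v (_ : v ∈ univ) => h v]
  obtain ⟨k, hk⟩ := hirr v x₀
  refine ⟨k + 1, k.succ_ne_zero, ?_⟩
  rw [pow_succ', mul_apply]
  exact (mul_pos hv hk).trans_le <| Finset.single_le_sum (f := fun w => p u w * (p ^ k) w x₀)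
    (fun w _ => mul_nonneg (hp.1 u w) (pow_apply_nonneg hp.1 k w x₀)) (mem_univ v)

theorem exists_forall_avoidProb_lt_one (hp : p ∈ rowStochastic ℝ S)
    (hirr : ∀ u v : S, ∃ n : ℕ, 0 < (p ^ n) u v) : ∃ N, ∀ u, avoidProb p x₀ N u < 1 := by
  choose n hn0 hpos using exists_pow_apply_pos (x₀ := x₀) hp hirr
  refine ⟨univ.sup n, fun u => ?_⟩
  calc avoidProb p x₀ (univ.sup n) u ≤ avoidProb p x₀ (n u) u :=
        avoidProb_antitone hp u (le_sup (mem_univ u))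
    _ < 1 := by linarith [avoidProb_add_pow_apply_le_one (x₀ := x₀) hp (hn0 u) u, hpos u]

theorem avoidProb_add_le (hp0 : ∀ u v, 0 ≤ p u v) {N : ℕ} {c : ℝ}
    (hc : ∀ v, avoidProb p x₀ N v ≤ c) (m : ℕ) (u : S) :
    avoidProb p x₀ (m + N) u ≤ c * avoidProb p x₀ m u :=
  calc avoidProb p x₀ (m + N) u = (tabooMatrix p x₀ ^ m *ᵥ avoidProb p x₀ N) u := by
        rw [avoidProb, avoidProb, mulVec_mulVec, pow_add]
    _ ≤ (tabooMatrix p x₀ ^ m *ᵥ (c • 1)) u :=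
        mulVec_apply_mono (pow_apply_nonneg (tabooMatrix_nonneg hp0) m)
          (fun v => by simpa using hc v) u
    _ = c * avoidProb p x₀ m u := by rw [mulVec_smul]; rfl

theorem summable_succ_sq_mul_avoidProb (hp : p ∈ rowStochastic ℝ S)
    (hirr : ∀ u v : S, ∃ n : ℕ, 0 < (p ^ n) u v) (u : S) :
    Summable fun n : ℕ => ((n : ℝ) + 1) ^ 2 * avoidProb p x₀ n u := by
  obtain ⟨N, hN⟩ := exists_forall_avoidProb_lt_one (x₀ := x₀) hp hirr
  have hN0 : N ≠ 0 := by rintro rfl; simpa [avoidProb_zero] using hN u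
  have : Nonempty S := ⟨u⟩
  obtain ⟨v, hv⟩ := Finite.exists_max fun v => avoidProb p x₀ N v
  obtain ⟨ρ, hρ0, hρ1, hρN⟩ := exists_pow_ge_of_lt_one (hN v) hN0
  have hdecay : ∀ n, avoidProb p x₀ n u ≤ ρ ^ n / ρ ^ N :=
    le_pow_div_pow_of_le_pow_mul_add hρ0 hρ1.le hN0 (fun n => avoidProb_le_one hp n u) fun n =>
      (avoidProb_add_le hp.1 hv n u).trans
        (mul_le_mul_of_nonneg_right hρN (avoidProb_nonneg hp.1 n u))
  refine ((summable_succ_sq_mul_pow hρ0.le hρ1).div_const (ρ ^ N)).of_nonneg_of_le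
    (fun n => mul_nonneg (by positivity) (avoidProb_nonneg hp.1 n u)) fun n => ?_
  rw [mul_div_assoc]
  exact mul_le_mul_of_nonneg_left (hdecay n) (by positivity)

theorem summable_succ_sq_mul_firstVisitProb (hp : p ∈ rowStochastic ℝ S)
    (hirr : ∀ u v : S, ∃ n : ℕ, 0 < (p ^ n) u v) (u : S) :
    Summable fun n : ℕ => ((n : ℝ) + 1) ^ 2 * firstVisitProb p x₀ n u :=
  (summable_succ_sq_mul_avoidProb hp hirr u).of_nonneg_of_le
    (fun n => mul_nonneg (by positivity) (firstVisitProb_nonneg hp.1 n u))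
    fun n => mul_le_mul_of_nonneg_left (firstVisitProb_le_avoidProb hp n u) (by positivity)

variable (p x₀) in
/-- `P_π(T_{x₀} > n)` when `π` is the initial distribution. -/
noncomputable def hittingTail (π : S → ℝ) (n : ℕ) : ℝ :=
  ∑ y ∈ univ.erase x₀, π y * avoidProb p x₀ n y

variable {π : S → ℝ}

theorem hittingTail_zero (hπ1 : ∑ u, π u = 1) : hittingTail p x₀ π 0 = 1 - π x₀ := by
  simp [hittingTail, avoidProb_zero, Finset.sum_erase_eq_sub, hπ1]

theorem hittingTail_sub_succ (hπs : ∀ v, ∑ u, π u * p u v = π v) (n : ℕ) :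
    hittingTail p x₀ π n - hittingTail p x₀ π (n + 1) = π x₀ * avoidProb p x₀ (n + 1) x₀ := by
  have hstat : ∑ y, π y * avoidProb p x₀ (n + 1) y = hittingTail p x₀ π n := by
    simp_rw [avoidProb_succ, tabooMatrix_mulVec_apply, Finset.mul_sum]
    rw [Finset.sum_comm]
    refine Finset.sum_congr rfl fun v _ => ?_
    rw [← hπs v, Finset.sum_mul]
    exact Finset.sum_congr rfl fun u _ => by ring
  rw [← hstat, ← Finset.add_sum_erase _ _ (mem_univ x₀), hittingTail]
  ring

theorem tendsto_hittingTail (hp : p ∈ rowStochastic ℝ S)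
    (hirr : ∀ u v : S, ∃ n : ℕ, 0 < (p ^ n) u v) :
    Tendsto (hittingTail p x₀ π) atTop (𝓝 0) := by
  have hlim : ∀ y, Tendsto (fun n => avoidProb p x₀ n y) atTop (𝓝 0) := fun y =>
    ((summable_succ_sq_mul_avoidProb hp hirr y).of_nonneg_of_le (avoidProb_nonneg hp.1 · y)
      fun n => le_mul_of_one_le_left (avoidProb_nonneg hp.1 n y)
        (one_le_pow₀ (by linarith [n.cast_nonneg (α := ℝ)]))).tendsto_atTop_zero
  have := tendsto_finsetSum (univ.erase x₀) fun y _ => (hlim y).const_mul (π y)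
  rwa [Finset.sum_eq_zero fun y _ => mul_zero (π y)] at this

theorem hasSum_hittingTime (hp : p ∈ rowStochastic ℝ S)
    (hirr : ∀ u v : S, ∃ n : ℕ, 0 < (p ^ n) u v) (hπ0 : ∀ u, 0 ≤ π u) :
    HasSum (fun z : {y : S // y ≠ x₀} × {L : List S // ∀ y ∈ L, y ≠ x₀} =>
        π z.1.1 * pathProb p (z.1.1 :: z.2.1 ++ [x₀]) * ((z.2.1.length : ℝ) + 1))
      (∑' n : ℕ, ((n : ℝ) + 1) * (hittingTail p x₀ π n - hittingTail p x₀ π (n + 1))) := by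
  have hfirst : ∀ y, Summable fun n : ℕ => ((n : ℝ) + 1) * firstVisitProb p x₀ n y := fun y =>
    (summable_succ_sq_mul_firstVisitProb hp hirr y).of_nonneg_of_le
      (fun n => mul_nonneg (by positivity) (firstVisitProb_nonneg hp.1 n y))
      fun n => mul_le_mul_of_nonneg_right (le_self_pow₀ (by linarith [n.cast_nonneg (α := ℝ)])
        two_ne_zero) (firstVisitProb_nonneg hp.1 n y)
  have hterm : ∀ n : ℕ, ((n : ℝ) + 1) * (hittingTail p x₀ π n - hittingTail p x₀ π (n + 1))
      = ∑ y ∈ univ.erase x₀, π y * (((n : ℝ) + 1) * firstVisitProb p x₀ n y) := fun n => by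
    simp only [hittingTail, ← Finset.sum_sub_distrib, Finset.mul_sum, ← avoidProb_sub_succ hp.2,
      Pi.sub_apply]
    exact Finset.sum_congr rfl fun y _ => by ring
  have htail :
      HasSum (fun n : ℕ => ((n : ℝ) + 1) * (hittingTail p x₀ π n - hittingTail p x₀ π (n + 1)))
      (∑ y ∈ univ.erase x₀, π y * ∑' n : ℕ, ((n : ℝ) + 1) * firstVisitProb p x₀ n y) := by
    simpa only [hterm] using hasSum_sum fun y _ => (hfirst y).hasSum.mul_left (π y)
  rw [htail.tsum_eq, Finset.sum_subtype (univ.erase x₀) (p := (· ≠ x₀)) (fun v => by simp),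
    ← (Equiv.sigmaEquivProd _ _).hasSum_iff]
  refine hasSum_sigma_of_nonneg (fun z => ?_) (fun y => ?_) (hasSum_fintype _)
  · exact mul_nonneg (mul_nonneg (hπ0 _) (pathProb_nonneg hp.1 _)) (by positivity)
  · simpa only [Function.comp_apply, Equiv.sigmaEquivProd_apply, mul_assoc] using
      (hasSum_pathProb_avoiding hp.1 (fun n => by positivity) y.1 (hfirst y).hasSum).mul_left (π y)

end Taboo

/-- For an irreducible Markov chain on a finite state space `S` with
stationary distribution `π` and `π(x₀) > 0`, the first return time `ξ` to `x₀`
(starting at `x₀`) satisfies `E[ξ²] = (1 + 2·E_π[T_{x₀}]) / π(x₀)`.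

`E[ξ²]` is encoded as the sum over all tours `x₀ :: L ++ [x₀]` (with the interior
`L` avoiding `x₀`) of the tour probability times `(|L|+1)²`, where `ξ = |L|+1`.
`E_π[T_{x₀}]` is encoded as the sum over all starting states `y ≠ x₀` and interior
lists `L` avoiding `x₀` of `π(y)` times the path probability of `y :: L ++ [x₀]`
times the hitting time `|L|+1` (the contribution of starting at `x₀` itself, where
`T = 0`, vanishes). -/
theorem return_time_second_moment_identity {S : Type*} [Fintype S] [DecidableEq S]
    (p : Matrix S S ℝ) (π : S → ℝ) (x₀ : S)
    (hp0 : ∀ u v, 0 ≤ p u v) (hp1 : ∀ u, ∑ v, p u v = 1)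
    (hirr : ∀ u v : S, ∃ n : ℕ, 0 < (p ^ n) u v)
    (hπ0 : ∀ u, 0 ≤ π u) (hπ1 : ∑ u, π u = 1)
    (hπs : ∀ v, ∑ u, π u * p u v = π v)
    (hx : 0 < π x₀) :
    (∑' L : {L : List S // ∀ y ∈ L, y ≠ x₀},
        pathProb (fun u v => p u v) (x₀ :: L.1 ++ [x₀]) * ((L.1.length : ℝ) + 1) ^ 2)
      = (1 + 2 * ∑' z : {y : S // y ≠ x₀} × {L : List S // ∀ y ∈ L, y ≠ x₀},
            π z.1.1 * pathProb (fun u v => p u v) (z.1.1 :: z.2.1 ++ [x₀])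
              * ((z.2.1.length : ℝ) + 1))
        / π x₀ := by
  have hp : p ∈ rowStochastic ℝ S := mem_rowStochastic_iff_sum.2 ⟨hp0, hp1⟩
  have hreturn := hasSum_pathProb_avoiding (x₀ := x₀) hp0 (w := fun n => ((n : ℝ) + 1) ^ 2)
    (fun n => by positivity) x₀ (summable_succ_sq_mul_firstVisitProb hp hirr x₀).hasSum
  rw [hreturn.tsum_eq, (hasSum_hittingTime hp hirr hπ0).tsum_eq, eq_div_iff hx.ne', mul_comm]
  simp only [← avoidProb_sub_succ hp.2, Pi.sub_apply]
  exact second_moment_eq_of_tails (summable_succ_sq_mul_avoidProb hp hirr x₀)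
    (by simp [avoidProb_zero]) (tendsto_hittingTail hp hirr) (hittingTail_zero hπ1)
    (hittingTail_sub_succ hπs)
end

section
/- Correctness of the proposal distribution in the neighborhood-sampling algorithm: let s be a connected induced (k−1)-subgraph of G with total degree d_s = Σ_{w∈V(s)} deg_G(w). Sample u ∈ V(s) with probability proportional to d_s − deg_G(u), then a ∈ V(s)\{u} with probability proportional to deg_G(a), then v uniformly from N_G(a). Then the probability of producing a pair (u,v) is proportional to |N_G(v) ∩ (V(s)\{u})|; consequently, accepting (u,v) with probability 1/|N_G(v) ∩ (V(s)\{u})| yields a uniform distribution over pairs (u,v) ∈ V(s) × N_G(V(s)) with v adjacent to V(s)\{u}. -/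
/-!
Each of the three stages has a normaliser that the next stage cancels: `1/deg a` against
`deg a`, and `d_s - deg u` against itself.  So every neighbour `a ∈ V(s) \ {u}` of `v`
contributes exactly `1/((k-2) d_s)`, and `P(u,v)` counts those neighbours.
-/

open Finset

namespace SimpleGraph

variable {V : Type*} [Fintype V] [DecidableEq V] (G : SimpleGraph V) [DecidableRel G.Adj]

theorem filter_adj_eq_neighborFinset_inter (t : Finset V) (v : V) :
    t.filter (G.Adj · v) = G.neighborFinset v ∩ t := by
  ext a
  simp [G.adj_comm, and_comm]

theorem sum_ite_adj_const (t : Finset V) (v : V) (c : ℝ) :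
    (∑ a ∈ t, if G.Adj a v then c else 0) = (G.neighborFinset v ∩ t).card * c := by
  rw [← sum_filter, filter_adj_eq_neighborFinset_inter, sum_const, nsmul_eq_mul]

theorem sum_degree_sub_degree_pos {s : Finset V} {u : V} (hu : u ∈ s)
    (hdeg : ∀ w ∈ s, 0 < G.degree w) (hs : (s.erase u).Nonempty) :
    0 < ∑ w ∈ s, (G.degree w : ℝ) - G.degree u := by
  rw [← add_sum_erase s _ hu, add_sub_cancel_left]
  exact sum_pos (fun w hw ↦ by exact_mod_cast hdeg w (mem_of_mem_erase hw)) hs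

theorem sum_adj_three_stage_prob {t : Finset V} (v : V) (hdeg : ∀ a ∈ t, G.degree a ≠ 0)
    {y : ℝ} (hy : y ≠ 0) (z : ℝ) :
    (∑ a ∈ t, if G.Adj a v then
        ((G.degree a : ℝ))⁻¹ * ((G.degree a : ℝ) / y) * (y / z) else 0)
      = (G.neighborFinset v ∩ t).card / z := by
  have hterm : ∀ a ∈ t, (if G.Adj a v then
      ((G.degree a : ℝ))⁻¹ * ((G.degree a : ℝ) / y) * (y / z) else 0)
        = if G.Adj a v then 1 / z else 0 := fun a ha ↦ by
    have : (G.degree a : ℝ) ≠ 0 := by exact_mod_cast hdeg a ha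
    split_ifs <;> field_simp
  rw [sum_congr rfl hterm, sum_ite_adj_const, mul_one_div]

end SimpleGraph

theorem proposal_distribution_correct_general {V : Type*} [Fintype V] [DecidableEq V]
    (G : SimpleGraph V) [DecidableRel G.Adj] (s : Finset V) (k : ℕ)
    (hk : 3 ≤ k) (hcard : s.card = k - 1)
    (hdeg : ∀ w ∈ s, 0 < G.degree w) :
    (∀ u ∈ s, ∀ v : V,
      (∑ a ∈ s.erase u,
          if G.Adj a v then
            ((G.degree a : ℝ))⁻¹
              * ((G.degree a : ℝ) / ((∑ w ∈ s, (G.degree w : ℝ)) - (G.degree u : ℝ)))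
              * (((∑ w ∈ s, (G.degree w : ℝ)) - (G.degree u : ℝ))
                  / (((k : ℝ) - 2) * ∑ w ∈ s, (G.degree w : ℝ)))
          else 0)
        = ((G.neighborFinset v ∩ s.erase u).card : ℝ)
            / (((k : ℝ) - 2) * ∑ w ∈ s, (G.degree w : ℝ)))
    ∧ (∀ u ∈ s, ∀ v : V, 0 < (G.neighborFinset v ∩ s.erase u).card →
        (∑ a ∈ s.erase u,
            if G.Adj a v then
              ((G.degree a : ℝ))⁻¹
                * ((G.degree a : ℝ) / ((∑ w ∈ s, (G.degree w : ℝ)) - (G.degree u : ℝ)))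
                * (((∑ w ∈ s, (G.degree w : ℝ)) - (G.degree u : ℝ))
                    / (((k : ℝ) - 2) * ∑ w ∈ s, (G.degree w : ℝ)))
            else 0)
          * (((G.neighborFinset v ∩ s.erase u).card : ℝ))⁻¹
          = 1 / (((k : ℝ) - 2) * ∑ w ∈ s, (G.degree w : ℝ))) := by
  have hs : ∀ u ∈ s, (s.erase u).Nonempty := fun u hu ↦ by
    rw [← card_pos, card_erase_of_mem hu]
    omega
  have hP := fun u (hu : u ∈ s) (v : V) ↦
    G.sum_adj_three_stage_prob (t := s.erase u) v (fun a ha ↦ (hdeg a (mem_of_mem_erase ha)).ne')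
      (G.sum_degree_sub_degree_pos hu hdeg (hs u hu)).ne'
      (((k : ℝ) - 2) * ∑ w ∈ s, (G.degree w : ℝ))
  refine ⟨hP, fun u hu v hpos ↦ ?_⟩
  rw [hP u hu v, div_mul_eq_mul_div, mul_inv_cancel₀ (by exact_mod_cast hpos.ne')]

/-- correctness of the proposal distribution in the
neighborhood-sampling algorithm: let `s` be a connected induced
`(k−1)`-subgraph of `G` with total degree `d_s = ∑_{w∈V(s)} deg(w)`.  Sampling
`u ∈ V(s)` with probability `∝ d_s − deg(u)`, then `a ∈ V(s)\{u}` with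
probability `∝ deg(a)`, then `v` uniformly from `N(a)` produces the pair `(u,v)`
with probability `P(u,v) = |N(v) ∩ (V(s)\{u})| / ((k−2)·d_s)`, i.e. proportional
to `|N(v) ∩ (V(s)\{u})|`; consequently, accepting with probability
`1/|N(v) ∩ (V(s)\{u})|` yields the uniform value `1/((k−2)·d_s)` for every valid
pair. -/
theorem proposal_distribution_correct {V : Type*} [Fintype V] [DecidableEq V]
    (G : SimpleGraph V) [DecidableRel G.Adj] (s : Finset V) (k : ℕ)
    (hk : 3 ≤ k) (hcard : s.card = k - 1)
    (hdeg : ∀ w ∈ s, 0 < G.degree w)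
    (hconn : (G.induce (s : Set V)).Connected) :
    (∀ u ∈ s, ∀ v : V,
      (∑ a ∈ s.erase u,
          if G.Adj a v then
            ((G.degree a : ℝ))⁻¹
              * ((G.degree a : ℝ) / ((∑ w ∈ s, (G.degree w : ℝ)) - (G.degree u : ℝ)))
              * (((∑ w ∈ s, (G.degree w : ℝ)) - (G.degree u : ℝ))
                  / (((k : ℝ) - 2) * ∑ w ∈ s, (G.degree w : ℝ)))
          else 0)
        = ((G.neighborFinset v ∩ s.erase u).card : ℝ)
            / (((k : ℝ) - 2) * ∑ w ∈ s, (G.degree w : ℝ)))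
    ∧ (∀ u ∈ s, ∀ v : V, 0 < (G.neighborFinset v ∩ s.erase u).card →
        (∑ a ∈ s.erase u,
            if G.Adj a v then
              ((G.degree a : ℝ))⁻¹
                * ((G.degree a : ℝ) / ((∑ w ∈ s, (G.degree w : ℝ)) - (G.degree u : ℝ)))
                * (((∑ w ∈ s, (G.degree w : ℝ)) - (G.degree u : ℝ))
                    / (((k : ℝ) - 2) * ∑ w ∈ s, (G.degree w : ℝ)))
            else 0)
          * (((G.neighborFinset v ∩ s.erase u).card : ℝ))⁻¹
          = 1 / (((k : ℝ) - 2) * ∑ w ∈ s, (G.degree w : ℝ))) :=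
  proposal_distribution_correct_general G s k hk hcard hdeg
end

section
/- Subgraph counting as an edge sum on the higher-order network: let G^(k−1) be the graph whose vertices are connected induced (k−1)-subgraphs of G, with u ~ v iff |V(u) ∩ V(v)| = k−2. For an edge (u,v) of G^(k−1), the induced subgraph on V(u) ∪ V(v) has exactly k vertices and is connected; moreover, for each connected induced k-subgraph s of G, the number of edges (u,v) of G^(k−1) with V(u) ∪ V(v) = V(s) equals C(k − |A_s|, 2) when this number is positive, where A_s is the set of articulation points of s — that is, the pairs (x,y) of distinct non-articulation vertices of s are in bijection with such edges. -/
/-!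
Two connected sets of size `k - 1` meeting in `k - 2 ≥ 1` vertices have a connected union of
size `k`. Conversely, a pair `(A, B)` of `(k - 1)`-subsets of a `k`-set `S` with `A ∪ B = S` and
`|A ∩ B| = k - 2` is exactly `(S \ {x}, S \ {y})` for distinct `x, y ∈ S`, and both parts induce
connected subgraphs iff `x` and `y` are non-articulation points of `S`. So these ordered pairs
are the off-diagonal pairs of non-articulation points, of which there are `2 · C(k - |A_S|, 2)`.
-/

open Finset

namespace Finset

variable {α : Type*}

lemma card_offDiag_eq_two_mul_choose (s : Finset α) : #s.offDiag = 2 * (#s).choose 2 := by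
  classical
  rw [← Sym2.card_image_offDiag, Sym2.two_mul_card_image_offDiag]

lemma card_filter_eq_card_sub_ncard (s : Finset α) (q : α → Prop) [DecidablePred q] :
    #{x ∈ s | q x} = #s - {x | x ∈ s ∧ ¬ q x}.ncard := by
  have hcoe : {x | x ∈ s ∧ ¬ q x} = ↑{x ∈ s | ¬ q x} := by ext; simp
  rw [hcoe, Set.ncard_coe_finset, ← card_filter_add_card_filter_not (s := s) q,
    Nat.add_sub_cancel]

variable [DecidableEq α] {S A : Finset α} {x y : α}

lemma exists_erase_eq_of_subset_of_card_add_one (hAS : A ⊆ S) (hcard : #A + 1 = #S) :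
    ∃ x ∈ S, S.erase x = A := by
  obtain ⟨x, hxA, rfl⟩ := exists_eq_insert_iff.2 ⟨hAS, hcard⟩
  exact ⟨x, mem_insert_self x A, erase_insert hxA⟩

lemma erase_union_erase (hxy : x ≠ y) : S.erase x ∪ S.erase y = S := by
  ext w
  grind

lemma card_erase_inter_erase (hx : x ∈ S) (hy : y ∈ S) (hxy : x ≠ y) :
    #(S.erase x ∩ S.erase y) = #S - 2 := by
  have hunion := card_union_add_card_inter (S.erase x) (S.erase y)
  rw [erase_union_erase hxy, card_erase_of_mem hx, card_erase_of_mem hy] at hunion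
  have hS : 1 < #S := one_lt_card.2 ⟨x, hx, y, hy, hxy⟩
  omega

lemma exists_erase_eq_pair (hS : 2 ≤ #S) {B : Finset α} (hA : #A = #S - 1) (hB : #B = #S - 1)
    (hAB : #(A ∩ B) = #S - 2) (hcover : A ∪ B = S) :
    ∃ x ∈ S, ∃ y ∈ S, x ≠ y ∧ S.erase x = A ∧ S.erase y = B := by
  obtain ⟨x, hx, rfl⟩ := exists_erase_eq_of_subset_of_card_add_one
    (hcover ▸ subset_union_left) (by omega)
  obtain ⟨y, hy, rfl⟩ := exists_erase_eq_of_subset_of_card_add_one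
    (hcover ▸ subset_union_right) (by omega)
  refine ⟨x, hx, y, hy, ?_, rfl, rfl⟩
  rintro rfl
  rw [inter_self] at hAB
  omega

lemma setOf_pairs_eq_image_offDiag (p : Finset α → Prop) [DecidablePred p] (hS : 2 ≤ #S) :
    {P : Finset α × Finset α | #P.1 = #S - 1 ∧ #P.2 = #S - 1 ∧ p P.1 ∧ p P.2 ∧
        #(P.1 ∩ P.2) = #S - 2 ∧ P.1 ∪ P.2 = S} =
      (fun q : α × α => (S.erase q.1, S.erase q.2)) '' ↑{x ∈ S | p (S.erase x)}.offDiag := by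
  ext ⟨A, B⟩
  simp only [Set.mem_ofPred_eq, Set.mem_image, coe_offDiag, Set.mem_offDiag, mem_coe, mem_filter,
    Prod.exists, Prod.mk.injEq]
  constructor
  · rintro ⟨hA, hB, hpA, hpB, hAB, hcover⟩
    obtain ⟨x, hx, y, hy, hxy, rfl, rfl⟩ := exists_erase_eq_pair hS hA hB hAB hcover
    exact ⟨x, y, ⟨⟨hx, hpA⟩, ⟨hy, hpB⟩, hxy⟩, rfl, rfl⟩
  · rintro ⟨x, y, ⟨⟨hx, hpx⟩, ⟨hy, hpy⟩, hxy⟩, rfl, rfl⟩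
    exact ⟨card_erase_of_mem hx, card_erase_of_mem hy, hpx, hpy,
      card_erase_inter_erase hx hy hxy, erase_union_erase hxy⟩

lemma ncard_setOf_pairs (p : Finset α → Prop) [DecidablePred p] (hS : 2 ≤ #S) :
    {P : Finset α × Finset α | #P.1 = #S - 1 ∧ #P.2 = #S - 1 ∧ p P.1 ∧ p P.2 ∧
        #(P.1 ∩ P.2) = #S - 2 ∧ P.1 ∪ P.2 = S}.ncard = 2 * (#{x ∈ S | p (S.erase x)}).choose 2 := by
  have herase : Set.InjOn (fun q : α × α => (S.erase q.1, S.erase q.2))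
      ↑{x ∈ S | p (S.erase x)}.offDiag := by
    rintro ⟨a, b⟩ hab ⟨c, d⟩ - hacbd
    simp only [coe_offDiag, Set.mem_offDiag, coe_filter] at hab
    simp only [Prod.mk.injEq] at hacbd ⊢
    exact ⟨(erase_inj S hab.1.1).1 hacbd.1, (erase_inj S hab.2.1.1).1 hacbd.2⟩
  rw [setOf_pairs_eq_image_offDiag p hS, herase.ncard_image, Set.ncard_coe_finset,
    card_offDiag_eq_two_mul_choose]

end Finset

lemma SimpleGraph.connected_induce_union_of_nonempty_inter {V : Type*} [DecidableEq V]
    {G : SimpleGraph V} {A B : Finset V} (hA : (G.induce (A : Set V)).Connected)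
    (hB : (G.induce (B : Set V)).Connected) (hAB : (A ∩ B).Nonempty) :
    (G.induce ((A ∪ B : Finset V) : Set V)).Connected := by
  rw [coe_union]
  exact induce_union_connected hA.preconnected hB.preconnected (by exact_mod_cast hAB)

theorem hon_edge_structure_general {V : Type*} [DecidableEq V]
    (G : SimpleGraph V) (k : ℕ) (hk : 3 ≤ k) :
    (∀ A B : Finset V, A.card = k - 1 → B.card = k - 1 →
      (G.induce (A : Set V)).Connected → (G.induce (B : Set V)).Connected →
      (A ∩ B).card = k - 2 →
      (A ∪ B).card = k ∧ (G.induce ((A ∪ B : Finset V) : Set V)).Connected)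
    ∧ (∀ S : Finset V, S.card = k → (G.induce (S : Set V)).Connected →
        0 < Nat.choose
            (k - Set.ncard {w : V | w ∈ S ∧
                ¬ (G.induce ((S.erase w : Finset V) : Set V)).Connected}) 2 →
        Set.ncard {P : Finset V × Finset V |
            P.1.card = k - 1 ∧ P.2.card = k - 1 ∧
            (G.induce (P.1 : Set V)).Connected ∧ (G.induce (P.2 : Set V)).Connected ∧
            (P.1 ∩ P.2).card = k - 2 ∧ P.1 ∪ P.2 = S}
          = 2 * Nat.choose
              (k - Set.ncard {w : V | w ∈ S ∧
                  ¬ (G.induce ((S.erase w : Finset V) : Set V)).Connected}) 2) := by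
  classical
  refine ⟨fun A B hA hB hAc hBc hAB => ?_, fun S hS _ _ => ?_⟩
  · have hcard := card_union_add_card_inter A B
    exact ⟨by omega,
      SimpleGraph.connected_induce_union_of_nonempty_inter hAc hBc (card_pos.1 (by omega))⟩
  · subst hS
    rw [ncard_setOf_pairs (fun A : Finset V => (G.induce (A : Set V)).Connected) (by omega),
      card_filter_eq_card_sub_ncard]

/-- subgraph counting as an edge sum on the higher-order network:
(i) if `A`, `B` are vertex sets of connected induced `(k−1)`-subgraphs of `G`
with `|A ∩ B| = k−2` (an edge of `G^(k−1)`), then `|A ∪ B| = k` and the induced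
subgraph on `A ∪ B` is connected; (ii) for each connected induced `k`-subgraph
on the vertex set `S`, the number of (ordered) edges `(A,B)` of `G^(k−1)` with
`A ∪ B = S` equals `2·C(k − |A_S|, 2)` whenever `C(k − |A_S|, 2)` is positive,
where `A_S` is the set of articulation points of the subgraph on `S` — i.e. the
unordered such edges are in bijection with the pairs of distinct non-articulation
vertices of `S`. -/
theorem hon_edge_structure {V : Type*} [Fintype V] [DecidableEq V]
    (G : SimpleGraph V) [DecidableRel G.Adj] (k : ℕ) (hk : 3 ≤ k) :
    (∀ A B : Finset V, A.card = k - 1 → B.card = k - 1 →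
      (G.induce (A : Set V)).Connected → (G.induce (B : Set V)).Connected →
      (A ∩ B).card = k - 2 →
      (A ∪ B).card = k ∧ (G.induce ((A ∪ B : Finset V) : Set V)).Connected)
    ∧ (∀ S : Finset V, S.card = k → (G.induce (S : Set V)).Connected →
        0 < Nat.choose
            (k - Set.ncard {w : V | w ∈ S ∧
                ¬ (G.induce ((S.erase w : Finset V) : Set V)).Connected}) 2 →
        Set.ncard {P : Finset V × Finset V |
            P.1.card = k - 1 ∧ P.2.card = k - 1 ∧
            (G.induce (P.1 : Set V)).Connected ∧ (G.induce (P.2 : Set V)).Connected ∧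
            (P.1 ∩ P.2).card = k - 2 ∧ P.1 ∪ P.2 = S}
          = 2 * Nat.choose
              (k - Set.ncard {w : V | w ∈ S ∧
                  ¬ (G.induce ((S.erase w : Finset V) : Set V)).Connected}) 2) :=
  hon_edge_structure_general G k hk
end
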